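/- Let n ≥ 1. For every symplectic real-linear map A : ℍⁿ → ℍⁿ and every unit quaternion q (‖q‖ = 1), the Kraines 4-form Ω = Ω_𝐢∧Ω_𝐢 + Ω_𝐣∧Ω_𝐣 + Ω_𝐤∧Ω_𝐤 is invariant under the map T(u) = (A u)·q: for all u₁, u₂, u₃, u₄ ∈ ℍⁿ, Ω(T u₁, T u₂, T u₃, T u₄) = Ω(u₁, u₂, u₃, u₄). (The Kraines form is invariant under the natural action of Sp(n).Sp(1) on ℍⁿ.) -/

import Mathlib

open scoped Quaternion TensorProduct

noncomputable section

abbrev Hn (n : ℕ) := Fin n → ℍ[ℝ]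

/-- The quaternionic "symplectic product" `(u,v) = ∑ i, uᵢ * conj vᵢ`. -/
def sympProd {n : ℕ} (u v : Hn n) : ℍ[ℝ] := ∑ i, u i * star (v i)

/-- The real inner product `⟨u,v⟩ = Re (u,v)`. -/
def rInner {n : ℕ} (u v : Hn n) : ℝ := (sympProd u v).re

/-- Componentwise right scalar multiplication by a quaternion. -/
def rsmul {n : ℕ} (u : Hn n) (q : ℍ[ℝ]) : Hn n := fun i => u i * q

/-- The 2-form `Ω_a(u,v) = ⟨u·a, v⟩` associated to a quaternion `a`. -/
def OmegaA {n : ℕ} (a : ℍ[ℝ]) (u v : Hn n) : ℝ := rInner (rsmul u a) v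

/-- A real-linear map of `ℍⁿ` is symplectic if it is right `ℍ`-linear and
preserves the symplectic product. -/
def IsSymplectic {n : ℕ} (A : Hn n →ₗ[ℝ] Hn n) : Prop :=
  (∀ u q, A (rsmul u q) = rsmul (A u) q) ∧ ∀ u v, sympProd (A u) (A v) = sympProd u v

lemma rsmul_add {n : ℕ} (u w : Hn n) (q : ℍ[ℝ]) :
    rsmul (u + w) q = rsmul u q + rsmul w q := funext fun i => add_mul _ _ _

lemma rsmul_smulR {n : ℕ} (c : ℝ) (u : Hn n) (q : ℍ[ℝ]) :
    rsmul (c • u) q = c • rsmul u q := by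
  funext i
  simp only [rsmul, Pi.smul_apply]
  exact smul_mul_assoc c (u i) q

lemma re_sum {α : Type*} (s : Finset α) (f : α → ℍ[ℝ]) :
    (∑ x ∈ s, f x).re = ∑ x ∈ s, (f x).re :=
  map_sum (QuaternionAlgebra.reₗ (-1 : ℝ) (0 : ℝ) (-1 : ℝ)) f s

lemma sympProd_add_left {n : ℕ} (u w v : Hn n) :
    sympProd (u + w) v = sympProd u v + sympProd w v := by
  simp [sympProd, add_mul, Finset.sum_add_distrib]

lemma sympProd_smul_left {n : ℕ} (c : ℝ) (u v : Hn n) :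
    sympProd (c • u) v = c • sympProd u v := by
  simp [sympProd, smul_mul_assoc, Finset.smul_sum]

lemma sympProd_add_right {n : ℕ} (u v w : Hn n) :
    sympProd u (v + w) = sympProd u v + sympProd u w := by
  simp [sympProd, mul_add, Finset.sum_add_distrib]

lemma sympProd_smul_right {n : ℕ} (c : ℝ) (u v : Hn n) :
    sympProd u (c • v) = c • sympProd u v := by
  simp [sympProd, mul_smul_comm, Finset.smul_sum]

lemma OmegaA_add_left {n : ℕ} (a : ℍ[ℝ]) (u w v : Hn n) :
    OmegaA a (u + w) v = OmegaA a u v + OmegaA a w v := by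
  simp [OmegaA, rInner, rsmul_add, sympProd_add_left]

lemma OmegaA_smul_left {n : ℕ} (a : ℍ[ℝ]) (c : ℝ) (u v : Hn n) :
    OmegaA a (c • u) v = c • OmegaA a u v := by
  simp [OmegaA, rInner, rsmul_smulR, sympProd_smul_left, Quaternion.re_smul]

lemma OmegaA_add_right {n : ℕ} (a : ℍ[ℝ]) (u v w : Hn n) :
    OmegaA a u (v + w) = OmegaA a u v + OmegaA a u w := by
  simp [OmegaA, rInner, sympProd_add_right]

lemma OmegaA_smul_right {n : ℕ} (a : ℍ[ℝ]) (c : ℝ) (u v : Hn n) :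
    OmegaA a u (c • v) = c • OmegaA a u v := by
  simp [OmegaA, rInner, sympProd_smul_right]

lemma OmegaA_self {n : ℕ} (a : ℍ[ℝ]) (ha : a.re = 0) (u : Hn n) :
    OmegaA a u u = 0 := by
  have : ∀ i, (u i * a * star (u i)).re = 0 := by
    intro i
    simp only [Quaternion.re_mul, Quaternion.imI_mul, Quaternion.imJ_mul, Quaternion.imK_mul,
      Quaternion.re_star, Quaternion.imI_star, Quaternion.imJ_star, Quaternion.imK_star, ha]
    ring
  simp [OmegaA, rInner, rsmul, sympProd, re_sum, this]

/-- `Ω_a` as an alternating 2-form on `ℍⁿ`, for a purely imaginary quaternion `a`. -/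
def omega2 {n : ℕ} (a : ℍ[ℝ]) (ha : a.re = 0) : Hn n [⋀^Fin 2]→ₗ[ℝ] ℝ where
  toFun v := OmegaA a (v 0) (v 1)
  map_update_add' := by
    intro _ m i x y
    fin_cases i <;>
      simp [Function.update, OmegaA_add_left, OmegaA_add_right, Fin.ext_iff]
  map_update_smul' := by
    intro _ m i c x
    fin_cases i <;>
      simp [Function.update, OmegaA_smul_left, OmegaA_smul_right, Fin.ext_iff]
  map_eq_zero_of_eq' := by
    intro v i j hv hij
    have h01 : v 0 = v 1 := by fin_cases i <;> fin_cases j <;> simp_all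
    show OmegaA a (v 0) (v 1) = 0
    rw [h01]
    exact OmegaA_self a ha _
/-- The wedge product of two real-valued alternating forms (the usual shuffle-sum
convention, so that it agrees with the determinant convention on covectors). -/
def wedge {V : Type*} [AddCommGroup V] [Module ℝ V] {p q : ℕ}
    (α : V [⋀^Fin p]→ₗ[ℝ] ℝ) (β : V [⋀^Fin q]→ₗ[ℝ] ℝ) : V [⋀^Fin (p + q)]→ₗ[ℝ] ℝ :=
  ((TensorProduct.lid ℝ ℝ).toLinearMap.compAlternatingMap (α.domCoprod β)).domDomCongr
    finSumFinEquiv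

/-- The quaternion unit `𝐢`. -/
def qI : ℍ[ℝ] := ⟨0, 1, 0, 0⟩
/-- The quaternion unit `𝐣`. -/
def qJ : ℍ[ℝ] := ⟨0, 0, 1, 0⟩
/-- The quaternion unit `𝐤`. -/
def qK : ℍ[ℝ] := ⟨0, 0, 0, 1⟩

/-- The Kraines 4-form `Ω = Ω_𝐢∧Ω_𝐢 + Ω_𝐣∧Ω_𝐣 + Ω_𝐤∧Ω_𝐤` on `ℍⁿ`. -/
def Kraines (n : ℕ) : Hn n [⋀^Fin 4]→ₗ[ℝ] ℝ :=
  wedge (omega2 qI rfl) (omega2 qI rfl) + wedge (omega2 qJ rfl) (omega2 qJ rfl) +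
    wedge (omega2 qK rfl) (omega2 qK rfl)

/-! Right multiplication by a unit quaternion `q` pulls `Ω_a` back to `Ω_{q a q̄}`, and
`a ↦ q a q̄` is a rotation of `Im ℍ`. Writing `Ω = ∑ₑ Ω_e ∧ Ω_e` over the basis `e = 𝐢, 𝐣, 𝐤`,
the sum `∑ₑ B(R e, R e)` of a bilinear map `B` is unchanged by an orthogonal `R`, so `Ω` is
`Sp(1)`-invariant. A symplectic map is `ℍ`-linear and preserves `(·,·)`, hence fixes every
`Ω_a`. -/

theorem AlternatingMap.domCoprod_compLinearMap {R M M' N₁ N₂ ιa ιb : Type*} [CommSemiring R]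
    [AddCommMonoid M] [Module R M] [AddCommMonoid M'] [Module R M'] [AddCommGroup N₁]
    [Module R N₁] [AddCommGroup N₂] [Module R N₂] [Fintype ιa] [Fintype ιb] [DecidableEq ιa]
    [DecidableEq ιb] (a : M [⋀^ιa]→ₗ[R] N₁) (b : M [⋀^ιb]→ₗ[R] N₂) (f : M' →ₗ[R] M) :
    (a.domCoprod b).compLinearMap f = (a.compLinearMap f).domCoprod (b.compLinearMap f) := by
  ext v
  simp only [compLinearMap_apply, domCoprod_apply, _root_.sum_apply]
  refine Finset.sum_congr rfl fun σ _ => ?_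
  induction σ using Quotient.inductionOn'
  rfl

section Wedge

variable {V W : Type*} [AddCommGroup V] [Module ℝ V] [AddCommGroup W] [Module ℝ W] {p q : ℕ}

lemma wedge_compLinearMap (α : V [⋀^Fin p]→ₗ[ℝ] ℝ) (β : V [⋀^Fin q]→ₗ[ℝ] ℝ) (f : W →ₗ[ℝ] V) :
    (wedge α β).compLinearMap f = wedge (α.compLinearMap f) (β.compLinearMap f) := by
  simp only [wedge, ← AlternatingMap.domCoprod_compLinearMap]
  rfl

def wedgeₗ : (V [⋀^Fin p]→ₗ[ℝ] ℝ) →ₗ[ℝ] (V [⋀^Fin q]→ₗ[ℝ] ℝ) →ₗ[ℝ] V [⋀^Fin (p + q)]→ₗ[ℝ] ℝ :=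
  (TensorProduct.mk ℝ _ _).compr₂ <|
    (AlternatingMap.domDomCongrₗ ℝ finSumFinEquiv).toLinearMap ∘ₗ
      (LinearMap.compAlternatingMapₗ ℝ (TensorProduct.lid ℝ ℝ).toLinearMap) ∘ₗ
        AlternatingMap.domCoprod'

end Wedge

theorem Matrix.sum_bilin_apply_of_mul_transpose_eq_one {R V W ι : Type*} [CommSemiring R]
    [AddCommMonoid V] [Module R V] [AddCommMonoid W] [Module R W] [Fintype ι] [DecidableEq ι]
    (B : V →ₗ[R] V →ₗ[R] W) (ω : ι → V) (M : Matrix ι ι R) (hM : M * M.transpose = 1) :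
    ∑ i, B (∑ j, M j i • ω j) (∑ k, M k i • ω k) = ∑ i, B (ω i) (ω i) := by
  have hM' : ∀ j k, ∑ i, M j i * M k i = if j = k then 1 else 0 := fun j k => by
    simpa [Matrix.mul_apply, Matrix.one_apply] using congrFun (congrFun hM j) k
  calc ∑ i, B (∑ j, M j i • ω j) (∑ k, M k i • ω k)
      = ∑ i, ∑ k, ∑ j, (M k i * M j i) • B (ω j) (ω k) := by
        simp only [map_sum, map_smul, LinearMap.sum_apply, LinearMap.smul_apply, Finset.smul_sum,
          smul_smul]
    _ = ∑ j, ∑ k, (∑ i, M k i * M j i) • B (ω j) (ω k) := by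
        simp only [Finset.sum_smul]
        rw [Finset.sum_comm, eq_comm, Finset.sum_comm]
        exact Finset.sum_congr rfl fun _ _ => Finset.sum_comm
    _ = ∑ i, B (ω i) (ω i) := by simp [hM']

theorem AlternatingMap.sum_compLinearMap {R M M' N ι κ : Type*} [Semiring R]
    [AddCommMonoid M] [Module R M] [AddCommMonoid M'] [Module R M'] [AddCommMonoid N]
    [Module R N]
    (s : Finset κ) (f : κ → M [⋀^ι]→ₗ[R] N) (g : M' →ₗ[R] M) :
    (∑ k ∈ s, f k).compLinearMap g = ∑ k ∈ s, (f k).compLinearMap g :=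
  map_sum (⟨⟨fun f => f.compLinearMap g, zero_compLinearMap g⟩, fun f₁ f₂ =>
    add_compLinearMap f₁ f₂ g⟩ : (M [⋀^ι]→ₗ[R] N) →+ M' [⋀^ι]→ₗ[R] N) f s

lemma re_mul_mul_star_eq_zero {a : ℍ[ℝ]} (ha : a.re = 0) (q : ℍ[ℝ]) :
    (q * a * star q).re = 0 := by
  simp only [Quaternion.re_mul, Quaternion.imI_mul, Quaternion.imJ_mul, Quaternion.imK_mul,
    Quaternion.re_star, Quaternion.imI_star, Quaternion.imJ_star, Quaternion.imK_star, ha]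
  ring

section Omega

variable {n : ℕ}

lemma OmegaA_add (a b : ℍ[ℝ]) (u v : Hn n) :
    OmegaA (a + b) u v = OmegaA a u v + OmegaA b u v := by
  simp [OmegaA, rInner, rsmul, sympProd, mul_add, add_mul, Finset.sum_add_distrib]

lemma OmegaA_smul (c : ℝ) (a : ℍ[ℝ]) (u v : Hn n) :
    OmegaA (c • a) u v = c * OmegaA a u v := by
  simp [OmegaA, rInner, rsmul, sympProd, re_sum, Quaternion.re_smul, Finset.mul_sum]

lemma OmegaA_rsmul_rsmul (a q : ℍ[ℝ]) (u v : Hn n) :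
    OmegaA a (rsmul u q) (rsmul v q) = OmegaA (q * a * star q) u v := by
  simp only [OmegaA, rInner, sympProd, rsmul, star_mul, mul_assoc]

lemma OmegaA_map_of_isSymplectic {A : Hn n →ₗ[ℝ] Hn n} (hA : IsSymplectic A) (a : ℍ[ℝ])
    (u v : Hn n) : OmegaA a (A u) (A v) = OmegaA a u v := by
  rw [OmegaA, rInner, ← hA.1, hA.2, OmegaA, rInner]

def imBasis : Fin 3 → ℍ[ℝ] := ![qI, qJ, qK]

def imCoord (b : ℍ[ℝ]) : Fin 3 → ℝ := ![b.imI, b.imJ, b.imK]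

lemma imBasis_re (i : Fin 3) : (imBasis i).re = 0 := by
  fin_cases i <;> rfl

lemma eq_sum_imCoord_smul_imBasis {b : ℍ[ℝ]} (hb : b.re = 0) :
    b = ∑ j, imCoord b j • imBasis j := by
  ext <;> simp [Fin.sum_univ_three, imCoord, imBasis, Quaternion.re_smul, hb] <;> simp [qI, qJ, qK]

variable (n) in
def omegaBasis (i : Fin 3) : Hn n [⋀^Fin 2]→ₗ[ℝ] ℝ := omega2 (imBasis i) (imBasis_re i)

lemma Kraines_eq_sum : Kraines n = ∑ i, wedge (omegaBasis n i) (omegaBasis n i) := by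
  rw [Fin.sum_univ_three]
  rfl

lemma omega2_eq_sum {b : ℍ[ℝ]} (hb : b.re = 0) :
    (omega2 b hb : Hn n [⋀^Fin 2]→ₗ[ℝ] ℝ) = ∑ j, imCoord b j • omegaBasis n j := by
  ext v
  change OmegaA b (v 0) (v 1) = _
  conv_lhs => rw [eq_sum_imCoord_smul_imBasis hb]
  simp only [Fin.sum_univ_three, OmegaA_add, OmegaA_smul, AlternatingMap.add_apply,
    AlternatingMap.smul_apply, smul_eq_mul]
  rfl

def conjMatrix (q : ℍ[ℝ]) : Matrix (Fin 3) (Fin 3) ℝ :=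
  Matrix.of fun j i => imCoord (q * imBasis i * star q) j

lemma conjMatrix_mul_transpose {q : ℍ[ℝ]} (hq : ‖q‖ = 1) :
    conjMatrix q * (conjMatrix q).transpose = 1 := by
  have hnq : q.re ^ 2 + q.imI ^ 2 + q.imJ ^ 2 + q.imK ^ 2 = 1 := by
    rw [← Quaternion.normSq_def', Quaternion.normSq_eq_norm_mul_self, hq, one_mul]
  ext j k
  fin_cases j <;> fin_cases k <;>
    simp [conjMatrix, Matrix.mul_apply, Fin.sum_univ_three, imCoord, imBasis, qI, qJ, qK] <;>
    first
      | ring1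
      | linear_combination (q.re ^ 2 + q.imI ^ 2 + q.imJ ^ 2 + q.imK ^ 2 + 1) * hnq

def rsmulₗ (q : ℍ[ℝ]) : Hn n →ₗ[ℝ] Hn n where
  toFun u := rsmul u q
  map_add' u w := rsmul_add u w q
  map_smul' c u := rsmul_smulR c u q

lemma omegaBasis_compLinearMap_rsmulₗ (q : ℍ[ℝ]) (i : Fin 3) :
    (omegaBasis n i).compLinearMap (rsmulₗ q) = ∑ j, conjMatrix q j i • omegaBasis n j := by
  have hb := re_mul_mul_star_eq_zero (imBasis_re i) q
  change _ = ∑ j, imCoord (q * imBasis i * star q) j • omegaBasis n j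
  rw [← omega2_eq_sum hb]
  ext v
  exact OmegaA_rsmul_rsmul _ q (v 0) (v 1)

lemma omegaBasis_compLinearMap_of_isSymplectic {A : Hn n →ₗ[ℝ] Hn n} (hA : IsSymplectic A)
    (i : Fin 3) : (omegaBasis n i).compLinearMap A = omegaBasis n i := by
  ext v
  exact OmegaA_map_of_isSymplectic hA _ (v 0) (v 1)

lemma Kraines_compLinearMap_rsmulₗ {q : ℍ[ℝ]} (hq : ‖q‖ = 1) :
    (Kraines n).compLinearMap (rsmulₗ q) = Kraines n := by
  -- `Kraines n` lives over `Fin 4` rather than `Fin (2 + 2)`, so `p` and `q` must be given.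
  simp only [Kraines_eq_sum, AlternatingMap.sum_compLinearMap,
    wedge_compLinearMap (p := 2) (q := 2), omegaBasis_compLinearMap_rsmulₗ]
  -- `wedgeₗ α β` unfolds to `wedge α β`.
  exact Matrix.sum_bilin_apply_of_mul_transpose_eq_one (wedgeₗ (p := 2) (q := 2)) (omegaBasis n) _
    (conjMatrix_mul_transpose hq)

lemma Kraines_compLinearMap_of_isSymplectic {A : Hn n →ₗ[ℝ] Hn n} (hA : IsSymplectic A) :
    (Kraines n).compLinearMap A = Kraines n := by
  simp only [Kraines_eq_sum, AlternatingMap.sum_compLinearMap,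
    wedge_compLinearMap (p := 2) (q := 2), omegaBasis_compLinearMap_of_isSymplectic hA]

end Omega

theorem statement5_general (n : ℕ) (A : Hn n →ₗ[ℝ] Hn n) (hA : IsSymplectic A)
    (q : ℍ[ℝ]) (hq : ‖q‖ = 1) (u : Fin 4 → Hn n) :
    Kraines n (fun s => rsmul (A (u s)) q) = Kraines n u := by
  calc Kraines n (fun s => rsmul (A (u s)) q)
      = ((Kraines n).compLinearMap (rsmulₗ q)).compLinearMap A u := rfl
    _ = Kraines n u := by
      rw [Kraines_compLinearMap_rsmulₗ hq, Kraines_compLinearMap_of_isSymplectic hA]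

theorem statement5 (n : ℕ) (hn : 1 ≤ n) (A : Hn n →ₗ[ℝ] Hn n) (hA : IsSymplectic A)
    (q : ℍ[ℝ]) (hq : ‖q‖ = 1) (u : Fin 4 → Hn n) :
    Kraines n (fun s => rsmul (A (u s)) q) = Kraines n u :=
  statement5_general n A hA q hq u
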